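/- Let L ≥ 3 and let S ⊆ Λ_L. For k ∈ ZMod L let c_k = |{j ∈ ZMod L : (k,j) ∈ S}| be the number of particles in column k, and let S' = {(k, j mod L) : k ∈ ZMod L, 0 ≤ j < c_k} be the configuration obtained by stacking the particles of each column from height 0 upward. Then |S'| = |S| and e(S') ≥ e(S): the column-stacking compression does not decrease the number of adjacent occupied pairs. -/

import Mathlib

open scoped Classical

noncomputable section

/-- A site of the discrete torus `Λ_L`. -/
abbrev Site (L : ℕ) := ZMod L × ZMod L

/-- Two sites of the discrete torus are adjacent if their difference is a unit vector. -/
def torusAdj (L : ℕ) (u v : Site L) : Prop :=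
  u - v = (1, 0) ∨ u - v = (-1, 0) ∨ u - v = (0, 1) ∨ u - v = (0, -1)

/-- `e(S)`: the number of unordered pairs of adjacent sites contained in `S`. -/
def torusE (L : ℕ) (S : Finset (Site L)) : ℕ :=
  ((S ×ˢ S).filter fun p => torusAdj L p.1 p.2).card / 2

/-- `c_k`: the number of particles of `S` in the column of index `k`. -/
def colCount (L : ℕ) (S : Finset (Site L)) (k : ZMod L) : ℕ :=
  (S.filter fun u => u.1 = k).card

/-- The column-stacking compression of `S`: in each column the particles are stacked
from height `0` upward, i.e. `S' = {(k, j mod L) : 0 ≤ j < c_k}`. -/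
def stacked (L : ℕ) (S : Finset (Site L)) : Finset (Site L) :=
  (S.image Prod.fst).biUnion fun k =>
    (Finset.range (colCount L S k)).image fun j => (k, (j : ZMod L))

/-! Every adjacent pair of the torus is either vertical, inside one column, or horizontal,
between columns `k` and `k + 1`; for `L ≥ 3` the four unit vectors are distinct, so `e(S)` is the
number of `v ∈ S` with `v + (1, 0) ∈ S` plus the number with `v + (0, 1) ∈ S`, and both counts
split column by column. Stacking keeps every column count `c_k`. Columns `k` and `k + 1` of `S`
share at most `min c_k c_(k+1)` heights, and the stacked columns share exactly that many. A proper
subset `T` of the cycle `ZMod L` has an element `j` with `j + 1 ∉ T`, so it contains at most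
`#T - 1` pairs `{j, j + 1}`, which the stacked column `{0, …, c_k - 1}` attains; a full column is
left unchanged. -/

open Finset

section Column

variable {α β : Type*} [Fintype α] [Fintype β] [DecidableEq α] [DecidableEq β]

def column (S : Finset (α × β)) (a : α) : Finset β :=
  univ.filter fun b => (a, b) ∈ S

lemma card_filter_eq_sum_card_column (S : Finset (α × β)) (P : α × β → Prop)
    [DecidablePred P] :
    #(S.filter P) = ∑ a, #((column S a).filter fun b => P (a, b)) := by
  simp only [card_filter, column, sum_filter, ← Fintype.sum_prod_type']
  rw [← sum_filter]
  simp

lemma card_eq_sum_card_column (S : Finset (α × β)) : #S = ∑ a, #(column S a) := by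
  simpa using card_filter_eq_sum_card_column S fun _ => True

lemma card_filter_add_mem_eq_sum_card_column [AddGroup α] [AddGroup β]
    (S : Finset (α × β)) (da : α) (db : β) :
    #(S.filter fun v => v + (da, db) ∈ S)
      = ∑ a, #((column S a).filter fun b => b + db ∈ column S (a + da)) := by
  rw [card_filter_eq_sum_card_column]
  simp [column]

end Column

section Shift

variable {G : Type*} [AddCommGroup G] [DecidableEq G]

lemma card_filter_sub_eq (S : Finset G) (d : G) :
    #((S ×ˢ S).filter fun p => p.1 - p.2 = d) = #(S.filter fun v => v + d ∈ S) := by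
  refine card_nbij' Prod.snd (fun v => (v + d, v)) ?_ ?_ ?_ (fun _ _ => rfl)
  · rintro ⟨u, v⟩ h
    simp only [coe_filter, mem_product, Set.mem_ofPred_eq, sub_eq_iff_eq_add'] at h
    obtain ⟨⟨hu, hv⟩, rfl⟩ := h
    simpa using ⟨hv, hu⟩
  · intro v hv
    simpa [and_comm] using hv
  · rintro ⟨u, v⟩ h
    simp only [coe_filter, mem_product, Set.mem_ofPred_eq, sub_eq_iff_eq_add'] at h
    obtain ⟨-, rfl⟩ := h
    rfl

lemma card_filter_sub_mem (S D : Finset G) :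
    #((S ×ˢ S).filter fun p => p.1 - p.2 ∈ D)
      = ∑ d ∈ D, #(S.filter fun v => v + d ∈ S) := by
  rw [card_eq_sum_card_fiberwise (s := (S ×ˢ S).filter fun p => p.1 - p.2 ∈ D)
    (f := fun p : G × G => p.1 - p.2) (t := D) fun p hp => (mem_filter.1 hp).2]
  refine sum_congr rfl fun d hd => ?_
  rw [filter_filter, ← card_filter_sub_eq]
  congr 1
  exact filter_congr fun p _ => ⟨And.right, fun h => ⟨h ▸ hd, h⟩⟩

lemma card_filter_add_neg_mem (S : Finset G) (d : G) :
    #(S.filter fun v => v + -d ∈ S) = #(S.filter fun v => v + d ∈ S) := by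
  refine card_nbij' (· - d) (· + d) ?_ ?_ (fun v _ => sub_add_cancel v d)
    (fun v _ => add_sub_cancel_right v d)
  all_goals
    intro v hv
    simp_all [← sub_eq_add_neg]

end Shift

section Segment

variable {L : ℕ} [NeZero L]

def initialSegment (L c : ℕ) [NeZero L] : Finset (ZMod L) :=
  univ.filter fun j => j.val < c

@[simp]
lemma mem_initialSegment {c : ℕ} {j : ZMod L} : j ∈ initialSegment L c ↔ j.val < c := by
  simp [initialSegment]

lemma card_initialSegment {c : ℕ} (hc : c ≤ L) : #(initialSegment L c) = c := by
  have val_cast {n : ℕ} (hn : n ∈ (range c : Set ℕ)) : (n : ZMod L).val = n :=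
    ZMod.val_cast_of_lt ((mem_range.1 hn).trans_le hc)
  refine (card_nbij' ZMod.val Nat.cast ?_ ?_ ?_ ?_).trans (card_range c)
  · intro j hj
    simpa using hj
  · intro n hn
    simpa [val_cast hn] using hn
  · intro j _
    exact ZMod.natCast_zmod_val j
  · intro n hn
    exact val_cast hn

lemma card_finset_zmod_le (T : Finset (ZMod L)) : #T ≤ L :=
  (card_le_univ T).trans_eq (ZMod.card L)

lemma initialSegment_inter_initialSegment (a b : ℕ) :
    initialSegment L a ∩ initialSegment L b = initialSegment L (min a b) := by
  ext; simp

lemma initialSegment_eq_univ {c : ℕ} (hc : L ≤ c) : initialSegment L c = univ := by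
  ext j; simpa using (ZMod.val_lt j).trans_le hc

lemma filter_add_one_mem_initialSegment {c : ℕ} (hc : c < L) :
    (initialSegment L c).filter (· + 1 ∈ initialSegment L c) = initialSegment L (c - 1) := by
  ext j
  simp only [mem_filter, mem_initialSegment, ZMod.val_add, ZMod.val_one_eq_one_mod, Nat.add_mod_mod]
  obtain h | h : j.val + 1 < L ∨ j.val + 1 = L := Nat.lt_or_eq_of_le (ZMod.val_lt j)
  · rw [Nat.mod_eq_of_lt h]; omega
  · rw [h, Nat.mod_self]; omega

lemma exists_mem_add_one_notMem {T : Finset (ZMod L)} (hT : T.Nonempty) (hT' : T ≠ univ) :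
    ∃ j ∈ T, j + 1 ∉ T := by
  obtain ⟨j₀, hj₀⟩ := hT
  by_contra! h
  have hj₀_add : ∀ n : ℕ, j₀ + n ∈ T := by
    intro n
    induction n with
    | zero => simpa
    | succ n ih => simpa [add_assoc] using h _ ih
  exact hT' (eq_univ_of_forall fun x => by simpa using hj₀_add (x - j₀).val)

lemma card_filter_add_one_mem_le {T : Finset (ZMod L)} (hT : T ≠ univ) :
    #(T.filter (· + 1 ∈ T)) ≤ #T - 1 := by
  rcases T.eq_empty_or_nonempty with rfl | hne
  · simp
  obtain ⟨j, hj, hj1⟩ := exists_mem_add_one_notMem hne hT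
  calc #(T.filter (· + 1 ∈ T)) ≤ #(T.erase j) := by
        refine card_le_card fun i hi => ?_
        rw [mem_filter] at hi
        exact mem_erase.2 ⟨by rintro rfl; exact hj1 hi.2, hi.1⟩
    _ = #T - 1 := card_erase_of_mem hj

lemma card_inter_le_card_initialSegment_inter (T U : Finset (ZMod L)) :
    #(T ∩ U) ≤ #(initialSegment L #T ∩ initialSegment L #U) := by
  rw [initialSegment_inter_initialSegment,
    card_initialSegment ((min_le_left _ _).trans (card_finset_zmod_le T))]
  exact le_min (card_le_card inter_subset_left) (card_le_card inter_subset_right)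

lemma card_filter_add_one_mem_le_initialSegment (T : Finset (ZMod L)) :
    #(T.filter (· + 1 ∈ T))
      ≤ #((initialSegment L #T).filter (· + 1 ∈ initialSegment L #T)) := by
  rcases (card_finset_zmod_le T).lt_or_eq with hlt | heq
  · rw [filter_add_one_mem_initialSegment hlt, card_initialSegment (by omega)]
    exact card_filter_add_one_mem_le fun h => by simp [h] at hlt
  · simpa [initialSegment_eq_univ heq.ge, ← heq] using card_filter_le T _

end Segment

section Stacking

variable {L : ℕ}

lemma colCount_eq_card_column [NeZero L] (S : Finset (Site L)) (k : ZMod L) :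
    colCount L S k = #(column S k) := by
  rw [colCount, card_filter_eq_sum_card_column]
  simp [filter_const, apply_ite card]

lemma colCount_le [NeZero L] (S : Finset (Site L)) (k : ZMod L) : colCount L S k ≤ L :=
  colCount_eq_card_column S k ▸ card_finset_zmod_le _

lemma mem_stacked [NeZero L] {S : Finset (Site L)} {v : Site L} :
    v ∈ stacked L S ↔ v.2.val < colCount L S v.1 := by
  simp only [stacked, pure_def, bind_def, sup_singleton_apply, mem_biUnion, mem_image,
    Prod.exists, exists_and_right, exists_eq_right, mem_range, exists_exists_and_eq_and]
  constructor
  · rintro ⟨k, -, j, hj, rfl⟩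
    rwa [ZMod.val_cast_of_lt (hj.trans_le (colCount_le S k))]
  · intro h
    obtain ⟨j, hj⟩ : (column S v.1).Nonempty := by
      rw [← card_pos, ← colCount_eq_card_column]
      exact (Nat.zero_le _).trans_lt h
    exact ⟨v.1, ⟨j, by simpa [column] using hj⟩, v.2.val, h, by simp⟩

lemma column_stacked [NeZero L] (S : Finset (Site L)) (k : ZMod L) :
    column (stacked L S) k = initialSegment L (colCount L S k) := by
  ext j; simp [column, mem_stacked]

lemma torusE_eq_card_add_card (hL : 3 ≤ L) (S : Finset (Site L)) :
    torusE L S = #(S.filter fun v => v + (1, 0) ∈ S) + #(S.filter fun v => v + (0, 1) ∈ S) := by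
  have : Fact (1 < L) := ⟨by omega⟩
  have : Fact (2 < L) := ⟨by omega⟩
  have hadj : ∀ p : Site L × Site L, torusAdj L p.1 p.2 ↔
      p.1 - p.2 ∈ ({(1, 0), -(1, 0), (0, 1), -(0, 1)} : Finset (Site L)) := by
    simp [torusAdj]
  rw [torusE, filter_congr fun p _ => hadj p, card_filter_sub_mem, sum_insert, sum_insert,
    sum_insert, sum_singleton, card_filter_add_neg_mem, card_filter_add_neg_mem]
  · omega
  all_goals simp [Prod.ext_iff, (ZMod.neg_one_ne_one (n := L)).symm]

end Stacking

/-- the column-stacking compression preserves the number of particles and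
does not decrease the number of adjacent occupied pairs. -/
theorem stacking_increases_edges (L : ℕ) (hL : 3 ≤ L) (S : Finset (Site L)) :
    (stacked L S).card = S.card ∧ torusE L S ≤ torusE L (stacked L S) := by
  have : NeZero L := ⟨by omega⟩
  constructor
  · rw [card_eq_sum_card_column, card_eq_sum_card_column S]
    refine sum_congr rfl fun k _ => ?_
    rw [column_stacked, card_initialSegment (colCount_le S k), colCount_eq_card_column]
  · simp only [torusE_eq_card_add_card hL, card_filter_add_mem_eq_sum_card_column, add_zero,
      filter_mem_eq_inter, column_stacked, colCount_eq_card_column]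
    exact add_le_add (sum_le_sum fun k _ => card_inter_le_card_initialSegment_inter _ _)
      (sum_le_sum fun k _ => card_filter_add_one_mem_le_initialSegment _)
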